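/- For every $\gamma \in [0, 1/96]$ and every angle $\theta$ with $|\tan\theta| \le \frac{\gamma\left(2\sqrt{1-\gamma^2}+\sqrt{1-4\gamma^2}\right)}{\sqrt{1-\gamma^2}\sqrt{1-4\gamma^2}-2\gamma^2}$ and $|\theta| < \pi/2$, one has $\sqrt{5 - 4\cos\theta} \le \sqrt{5 + 8\gamma^2 - 4\sqrt{1-\gamma^2}\sqrt{1-4\gamma^2}} \le 1.001$. -/

import Mathlib

/-!
Put `sin α = γ` and `sin β = 2γ`. With `a = √(1 - γ²) = cos α` and `b = √(1 - 4γ²) = cos β`,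
the numbers `c = ab - 2γ²` and `s = γ(2a + b)` are `cos (α + β)` and `sin (α + β)`, so the
hypothesis reads `|tan θ| ≤ tan (α + β)` and forces `cos θ ≥ cos (α + β) = c`; this is the
first inequality. The second follows from `ab ≥ 1 - (13/5)γ²`, which gives
`5 + 8γ² - 4ab ≤ 1 + (92/5)γ² ≤ 1.001²` for `γ ≤ 1/96`.
-/

open Real

lemma le_cos_of_abs_tan_le {θ c s : ℝ} (hc : 0 < c) (hcs : c ^ 2 + s ^ 2 = 1)
    (hθ : |θ| < π / 2) (h : |tan θ| ≤ s / c) : c ≤ cos θ := by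
  have hcos : 0 < cos θ := cos_pos_of_mem_Ioo (abs_lt.mp hθ)
  have hsin : |sin θ| * c ≤ s * cos θ := by
    rwa [tan_eq_sin_div_cos, abs_div, abs_of_pos hcos, div_le_div_iff₀ hcos hc] at h
  have hs : 0 ≤ s := by nlinarith [abs_nonneg (sin θ)]
  by_contra! hlt
  have hsin_gt : s < |sin θ| := by
    refine lt_of_pow_lt_pow_left₀ 2 (abs_nonneg _) ?_
    nlinarith [sin_sq_add_cos_sq θ, sq_abs (sin θ)]
  nlinarith

lemma sq_sub_add_sq_eq_one {a b γ : ℝ} (ha : a ^ 2 = 1 - γ ^ 2) (hb : b ^ 2 = 1 - 4 * γ ^ 2) :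
    (a * b - 2 * γ ^ 2) ^ 2 + (γ * (2 * a + b)) ^ 2 = 1 := by
  linear_combination (b ^ 2 + 4 * γ ^ 2) * ha + hb

lemma one_sub_le_sqrt_mul_sqrt {γ : ℝ} (hγ : γ ^ 2 ≤ 1 / 16) :
    1 - 13 / 5 * γ ^ 2 ≤ √(1 - γ ^ 2) * √(1 - 4 * γ ^ 2) := by
  rw [← sqrt_mul (by nlinarith)]
  refine (le_abs_self _).trans (abs_le_sqrt ?_)
  nlinarith [sq_nonneg γ]

/-- the key trigonometric estimate of Lemma 6.1:
if `|tan θ|` is bounded by the Reifenberg angle bound, then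
`√(5 - 4cos θ) ≤ √(5 + 8γ² - 4√(1-γ²)√(1-4γ²)) ≤ 1.001`. -/
theorem stmt_6 (γ θ : ℝ) (hγ0 : 0 ≤ γ) (hγ : γ ≤ 1 / 96)
    (hθ : |Real.tan θ| ≤
      γ * (2 * Real.sqrt (1 - γ ^ 2) + Real.sqrt (1 - 4 * γ ^ 2)) /
        (Real.sqrt (1 - γ ^ 2) * Real.sqrt (1 - 4 * γ ^ 2) - 2 * γ ^ 2))
    (hθ2 : |θ| < Real.pi / 2) :
    Real.sqrt (5 - 4 * Real.cos θ) ≤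
        Real.sqrt (5 + 8 * γ ^ 2 -
          4 * Real.sqrt (1 - γ ^ 2) * Real.sqrt (1 - 4 * γ ^ 2)) ∧
      Real.sqrt (5 + 8 * γ ^ 2 -
          4 * Real.sqrt (1 - γ ^ 2) * Real.sqrt (1 - 4 * γ ^ 2)) ≤ 1.001 := by
  have hγ2 : γ ^ 2 ≤ (1 / 96) ^ 2 := pow_le_pow_left₀ hγ0 hγ 2
  have hab := one_sub_le_sqrt_mul_sqrt (hγ2.trans (by norm_num))
  set a := √(1 - γ ^ 2)
  set b := √(1 - 4 * γ ^ 2)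
  have ha : a ^ 2 = 1 - γ ^ 2 := sq_sqrt (by nlinarith)
  have hb : b ^ 2 = 1 - 4 * γ ^ 2 := sq_sqrt (by nlinarith)
  have hc : 0 < a * b - 2 * γ ^ 2 := by nlinarith
  have hcos := le_cos_of_abs_tan_le hc (sq_sub_add_sq_eq_one ha hb) hθ2 hθ
  refine ⟨sqrt_le_sqrt (by linarith), sqrt_le_iff.mpr ⟨by norm_num, ?_⟩⟩
  nlinarith
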